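/- arXiv:2602.06080 — 2 statements merged into one kernel-verified Lean document; each statement's English description precedes it below -/
import Mathlib

section
/- Let θ(t) := ∑_{n ∈ ℤ} e^{−πn²t} for t > 0, and define Φ⋆(x) := e^{−x/4} · (θ(e^x) − 1 − e^{−x/2}) for x ∈ ℝ. Then the function ℬ_LB Φ⋆(s) := ∫₀^∞ Φ⋆(x) e^{−sx} dx + ∫₀^∞ Φ⋆(x) e^{−(1/2 − s)x} dx is holomorphic (complex differentiable) on the open strip { s ∈ ℂ : −1/2 < Re(s) < 1/4 }. -/
open Real MeasureTheory

/-- The Jacobi theta function `θ(t) = ∑_{n ∈ ℤ} e^{−πn²t}`. -/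
noncomputable def jacobiThetaFn (t : ℝ) : ℝ := ∑' n : ℤ, Real.exp (-π * (n : ℝ) ^ 2 * t)

/-- The centered logarithmic kernel at the self-dual scale,
`Φ⋆(x) = e^{−x/4} (θ(e^x) − 1 − e^{−x/2})`. -/
noncomputable def PhiStar (x : ℝ) : ℝ :=
  Real.exp (-x / 4) * (jacobiThetaFn (Real.exp x) - 1 - Real.exp (-x / 2))

/-- The left-strip representation
`ℬ_LB Φ⋆(s) = ∫₀^∞ Φ⋆(x) e^{−sx} dx + ∫₀^∞ Φ⋆(x) e^{−(1/2−s)x} dx`. -/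
noncomputable def BLB (s : ℂ) : ℂ :=
  (∫ x in Set.Ioi (0 : ℝ), (PhiStar x : ℂ) * Complex.exp (-s * x))
    + ∫ x in Set.Ioi (0 : ℝ), (PhiStar x : ℂ) * Complex.exp (-(1 / 2 - s) * x)

/-!
The substitution `t = eˣ` turns `∫₀^∞ Φ⋆(x) e^{-sx} dx` into the Mellin transform at `-s` of
`t ↦ Φ⋆(log t)` on `t > 1` (extended by `0`). This function vanishes near `0` and is
`O(t^{-3/4})` at infinity, because `θ(t) - 1 = O(e^{-πt})` makes `Φ⋆(x) = O(e^{-3x/4})`;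
so the Mellin transform is holomorphic for `Re < 3/4`. Both integrals in `ℬ_LB Φ⋆(s)` are
of this form, at `s` and at `1/2 - s`, and on the strip both have real part `> -3/4`.
-/

open Set Filter Asymptotics Complex

theorem ofReal_jacobiThetaFn (t : ℝ) : (jacobiThetaFn t : ℂ) = jacobiTheta (t * I) := by
  rw [jacobiThetaFn, ofReal_tsum, jacobiTheta]
  congr 1 with n
  rw [ofReal_exp]
  congr 1
  push_cast
  ring_nf
  simp

theorem continuousOn_jacobiThetaFn : ContinuousOn jacobiThetaFn (Ioi 0) := by
  have hre : jacobiThetaFn = fun t : ℝ => (jacobiTheta (t * I)).re := by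
    ext t; rw [← ofReal_jacobiThetaFn, ofReal_re]
  rw [hre]
  refine fun t ht => (continuous_re.continuousAt.comp ?_).continuousWithinAt
  exact (continuousAt_jacobiTheta (by simpa using ht)).comp (by fun_prop)

theorem continuous_PhiStar : Continuous PhiStar := by
  have hθ : Continuous fun x => jacobiThetaFn (rexp x) :=
    continuousOn_jacobiThetaFn.comp_continuous continuous_exp exp_pos
  unfold PhiStar
  fun_prop

theorem isBigO_jacobiThetaFn_exp_sub_one :
    (fun x => jacobiThetaFn (rexp x) - 1) =O[atTop] fun x => rexp (-(1 / 2) * x) := by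
  have him : Tendsto (fun x : ℝ => (rexp x : ℂ) * I) atTop (comap im atTop) := by
    rw [tendsto_comap_iff]
    exact tendsto_exp_atTop.congr fun x => by
      simp only [Function.comp_apply, mul_im, ofReal_re, ofReal_im, I_re, I_im]; ring
  have hθ := isBigO_at_im_infty_jacobiTheta_sub_one.comp_tendsto him
  refine (IsBigO.of_bound' ?_).trans (hθ.trans (IsBigO.of_bound' ?_))
  · refine Eventually.of_forall fun x => le_of_eq ?_
    rw [Function.comp_apply, ← ofReal_jacobiThetaFn, ← ofReal_one, ← ofReal_sub, norm_real]
  · refine Eventually.of_forall fun x => ?_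
    simp only [Function.comp_apply, mul_im, ofReal_re, I_im, ofReal_im, I_re, mul_zero, mul_one,
      add_zero, norm_eq_abs, abs_exp, exp_le_exp]
    nlinarith [add_one_le_exp x, exp_pos x, pi_gt_three]

theorem isBigO_PhiStar : PhiStar =O[atTop] fun x => rexp (-(3 / 4) * x) := by
  have hsplit : PhiStar = fun x => rexp (-x / 4) * (jacobiThetaFn (rexp x) - 1)
      - rexp (-(3 / 4) * x) := by
    ext x
    rw [PhiStar, mul_sub, ← Real.exp_add]
    ring_nf
  have hexp : (fun x => rexp (-x / 4) * rexp (-(1 / 2) * x)) = fun x => rexp (-(3 / 4) * x) := by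
    ext x; rw [← Real.exp_add]; ring_nf
  rw [hsplit]
  refine IsBigO.sub ?_ (isBigO_refl _ _)
  exact hexp ▸ (isBigO_refl _ _).mul isBigO_jacobiThetaFn_exp_sub_one

noncomputable def laplaceIoi (f : ℝ → ℂ) (s : ℂ) : ℂ :=
  ∫ x in Ioi (0 : ℝ), f x * cexp (-s * x)

theorem laplaceIoi_eq_mellin (f : ℝ → ℂ) (s : ℂ) :
    laplaceIoi f s = mellin ((Ioi 1).indicator (f ∘ Real.log)) (-s) := by
  have hsmul : ∀ t : ℝ, (t : ℂ) ^ (-s - 1) • (Ioi 1).indicator (f ∘ Real.log) t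
      = (Ioi 1).indicator (fun t : ℝ => (t : ℂ) ^ (-s - 1) • f (Real.log t)) t :=
    fun t => by by_cases ht : t ∈ Ioi 1 <;> simp [ht]
  rw [mellin, funext hsmul, setIntegral_indicator measurableSet_Ioi,
    inter_eq_right.2 (Ioi_subset_Ioi zero_le_one), ← Real.exp_zero, ← integral_comp_exp_Ioi]
  refine setIntegral_congr_fun measurableSet_Ioi fun x _ => ?_
  have hcpow : cexp x ^ (-s - 1) = cexp ((-s - 1) * x) := by
    rw [cpow_def_of_ne_zero (Complex.exp_ne_zero _), Complex.log_exp, mul_comm] <;>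
      simp [Real.pi_pos, Real.pi_pos.le]
  simp only [Real.log_exp, smul_eq_mul, real_smul, ofReal_exp]
  rw [hcpow, ← mul_assoc, ← Complex.exp_add, mul_comm]
  ring_nf

theorem locallyIntegrableOn_indicator_comp_log {f : ℝ → ℂ} (hf : Continuous f) :
    LocallyIntegrableOn ((Ioi 1).indicator (f ∘ Real.log)) (Ioi 0) := by
  rw [locallyIntegrableOn_iff isOpen_Ioi.isLocallyClosed]
  intro k hk hkc
  have hcont : ContinuousOn (f ∘ Real.log) k :=
    hf.comp_continuousOn (Real.continuousOn_log.mono fun t ht => ne_of_gt (hk ht))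
  exact (hcont.integrableOn_compact hkc).indicator measurableSet_Ioi

theorem differentiableAt_laplaceIoi {f : ℝ → ℂ} (hf : Continuous f) {a : ℝ}
    (hfa : f =O[atTop] fun x => rexp (-a * x)) {s : ℂ} (hs : -a < s.re) :
    DifferentiableAt ℂ (laplaceIoi f) s := by
  have hcomp : (Ioi 1).indicator (f ∘ Real.log) =O[atTop] (· ^ (-a)) := by
    refine (hfa.comp_tendsto tendsto_log_atTop).congr' ?_ ?_
    · filter_upwards [eventually_gt_atTop 1] with t ht using (indicator_of_mem ht _).symm
    · filter_upwards [eventually_gt_atTop 0] with t ht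
      simp [Real.rpow_def_of_pos ht, mul_comm]
  -- the function vanishes on `(0, 1]`, so any exponent at `0` will do
  have hzero : (Ioi 1).indicator (f ∘ Real.log) =O[nhdsWithin 0 (Ioi 0)] (· ^ (-(-s.re - 1))) := by
    refine (isBigO_zero _ _).congr' ?_ EventuallyEq.rfl
    filter_upwards [Ioo_mem_nhdsGT_of_mem ⟨le_refl (0 : ℝ), one_pos⟩] with t ht
    exact (indicator_of_notMem (not_lt.2 ht.2.le) _).symm
  have hmellin : DifferentiableAt ℂ (mellin ((Ioi 1).indicator (f ∘ Real.log))) (-s) :=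
    mellin_differentiableAt_of_isBigO_rpow (locallyIntegrableOn_indicator_comp_log hf)
      hcomp (by rw [neg_re]; linarith) hzero (by simp)
  rw [funext (laplaceIoi_eq_mellin f)]
  exact hmellin.comp s differentiable_neg.differentiableAt

/-- `ℬ_LB Φ⋆` is holomorphic on the open strip `−1/2 < Re s < 1/4`. -/
theorem BLB_holomorphic :
    DifferentiableOn ℂ BLB {s : ℂ | -1 / 2 < s.re ∧ s.re < 1 / 4} := by
  have hdecay : (fun x => (PhiStar x : ℂ)) =O[atTop] fun x => rexp (-(3 / 4) * x) :=
    ((isBigO_norm_left.2 isBigO_PhiStar).congr_left fun x => (norm_real _).symm).of_norm_left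
  have hL {s : ℂ} (hs : -(3 / 4) < s.re) :=
    differentiableAt_laplaceIoi (continuous_ofReal.comp continuous_PhiStar) hdecay hs
  have hBLB : BLB = fun s => laplaceIoi (fun x => (PhiStar x : ℂ)) s
      + laplaceIoi (fun x => (PhiStar x : ℂ)) (1 / 2 - s) := rfl
  rintro s ⟨hlo, hhi⟩
  have hright := hL (s := s) (by linarith)
  have hleft := (hL (s := 1 / 2 - s) (by norm_num; linarith)).comp s (by fun_prop)
  rw [hBLB]
  exact (hright.add hleft).differentiableWithinAt
end

section
/- Let α be a nonnegative integer, β an integer, and σ ∈ ℝ, and define Θ_{α,β}(t) := ∑_{n=1}^{∞} n^α t^{β/2} e^{−πn²t} for t > 0. If σ + β/2 − (α+1)/2 > 0, then the function t ↦ Θ_{α,β}(t) · t^{σ−1} is (absolutely) integrable on (0, ∞). -/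
/-!
Writing `s = σ + β/2`, the integrand is `∑ₙ (n+1)^α t^(s-1) e^{-π(n+1)²t}`. Each term has Mellin
integral `(n+1)^α Γ(s) (π(n+1)²)^{-s}`, so the series of these integrals is a multiple of
`∑ₙ (n+1)^{α-2s}`, which converges since `α - 2s < -1`. A series of integrable functions whose
L¹ norms are summable converges in L¹, and its L¹ sum agrees a.e. with the pointwise sum.
-/

open Real MeasureTheory Set

namespace MeasureTheory

variable {α E : Type*} [MeasurableSpace α] {μ : Measure α} [NormedAddCommGroup E]
  [CompleteSpace E]

lemma integrable_tsum_of_summable_integral_norm {ι : Type*} [Countable ι] {f : ι → α → E}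
    (hf : ∀ i, Integrable (f i) μ) (hsum : Summable fun i ↦ ∫ a, ‖f i a‖ ∂μ) :
    Integrable (fun a ↦ ∑' i, f i a) μ := by
  let F : ι → α →₁[μ] E := fun i ↦ (hf i).toL1 (f i)
  have hF : ∑' i, ‖F i‖ₑ ≠ ⊤ := by
    simp only [F, Integrable.enorm_toL1, ← ofReal_integral_norm_eq_lintegral_enorm (hf _)]
    rw [← ENNReal.ofReal_tsum_of_nonneg (fun i ↦ integral_nonneg fun _ ↦ norm_nonneg _) hsum]
    exact ENNReal.ofReal_ne_top
  have hF_ae : ∀ᵐ a ∂μ, ∀ i, F i a = f i a := ae_all_iff.2 fun i ↦ (hf i).coeFn_toL1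
  refine (L1.integrable_coeFn (∑' i, F i)).congr ?_
  filter_upwards [Lp.coeFn_tsum hF, hF_ae] with a hsum_a hF_a
  rw [hsum_a]
  exact tsum_congr hF_a

end MeasureTheory

lemma integrableOn_tsum_mul_exp_neg_mul_mul_rpow_Ioi {ι : Type*} [Countable ι] {a c : ι → ℝ}
    {s : ℝ} (hs : 0 < s) (hc : ∀ i, 0 < c i) (hsum : Summable fun i ↦ |a i| / c i ^ s) :
    IntegrableOn (fun t ↦ (∑' i, a i * exp (-(c i * t))) * t ^ (s - 1)) (Ioi 0) := by
  have hterm (i : ι) : IntegrableOn (fun t ↦ a i * exp (-(c i * t)) * t ^ (s - 1)) (Ioi 0) := by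
    refine IntegrableOn.congr_fun ((integrableOn_rpow_mul_exp_neg_mul_rpow (s := s - 1)
      (by linarith) one_pos (hc i)).const_mul (a i)) (fun t _ ↦ ?_) measurableSet_Ioi
    simp only [rpow_one, neg_mul]
    ring
  have hnorm (i : ι) : ∫ t in Ioi 0, ‖a i * exp (-(c i * t)) * t ^ (s - 1)‖
      = Gamma s * (|a i| / c i ^ s) := calc
    _ = ∫ t in Ioi 0, |a i| * (t ^ (s - 1) * exp (-(c i * t))) := by
      refine setIntegral_congr_fun measurableSet_Ioi fun t ht ↦ ?_
      rw [norm_mul, norm_mul, norm_of_nonneg (exp_pos _).le,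
        norm_of_nonneg (rpow_nonneg (le_of_lt ht) _), norm_eq_abs]
      ring
    _ = |a i| * ((1 / c i) ^ s * Gamma s) := by
      rw [integral_const_mul, integral_rpow_mul_exp_neg_mul_Ioi hs (hc i)]
    _ = Gamma s * (|a i| / c i ^ s) := by
      rw [div_rpow zero_le_one (hc i).le, one_rpow]
      ring
  simp_rw [← tsum_mul_right]
  exact integrable_tsum_of_summable_integral_norm hterm
    ((hsum.mul_left (Gamma s)).congr fun i ↦ (hnorm i).symm)

lemma summable_abs_succ_pow_div_rpow_pi_mul_succ_sq {k : ℕ} {s : ℝ} (h : (k : ℝ) + 1 < 2 * s) :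
    Summable fun n : ℕ ↦ |((n : ℝ) + 1) ^ k| / (π * ((n : ℝ) + 1) ^ 2) ^ s := by
  have hp : Summable fun n : ℕ ↦ ((n + 1 : ℕ) : ℝ) ^ ((k : ℝ) - 2 * s) :=
    (summable_nat_add_iff 1).2 (Real.summable_nat_rpow.2 (by linarith))
  refine (hp.mul_left (π ^ (-s))).congr fun n ↦ ?_
  have hn : 0 < (n : ℝ) + 1 := by positivity
  push_cast
  rw [abs_of_pos (by positivity), mul_rpow pi_pos.le (by positivity), ← rpow_natCast,
    ← rpow_natCast ((n : ℝ) + 1) 2, ← rpow_mul hn.le, rpow_sub hn, rpow_neg pi_pos.le]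
  field_simp
  rw [Nat.cast_ofNat, mul_comm]

/-- Mellin integrability of the monomial theta-series
`Θ_{α,β}(t) = ∑_{n≥1} n^α t^{β/2} e^{−πn²t}`: if `σ + β/2 − (α+1)/2 > 0`, then
`t ↦ Θ_{α,β}(t) t^{σ−1}` is integrable on `(0, ∞)`. -/
theorem monomial_theta_mellin_integrable (α : ℕ) (β : ℤ) (σ : ℝ)
    (h : σ + (β : ℝ) / 2 - ((α : ℝ) + 1) / 2 > 0) :
    IntegrableOn
      (fun t : ℝ =>
        (∑' n : ℕ, ((n : ℝ) + 1) ^ α * t ^ ((β : ℝ) / 2)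
            * Real.exp (-π * ((n : ℝ) + 1) ^ 2 * t)) * t ^ (σ - 1))
      (Set.Ioi 0) := by
  set s := σ + (β : ℝ) / 2
  have hs : 0 < s := by linarith [(Nat.cast_nonneg α : (0 : ℝ) ≤ α)]
  refine (integrableOn_tsum_mul_exp_neg_mul_mul_rpow_Ioi hs (fun n : ℕ ↦ by positivity)
    (summable_abs_succ_pow_div_rpow_pi_mul_succ_sq (k := α) (by linarith))).congr_fun
    (fun t (ht : 0 < t) ↦ ?_) measurableSet_Ioi
  dsimp only
  rw [show s - 1 = (β : ℝ) / 2 + (σ - 1) by ring, rpow_add ht, ← mul_assoc, ← tsum_mul_right]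
  congr 1
  refine tsum_congr fun n ↦ ?_
  simp only [neg_mul]
  ring
end
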